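/- arXiv:2506.04566 — 2 statements merged into one kernel-verified Lean document; each statement's English description precedes it below -/
import Mathlib

section
/- Let X be a finite nonempty set and let Z and Z' be neighboring finite multisets of vectors z : X → ℝ with |Z| ≥ 3. Then for every x ∈ X, leftmed(Z)_x ≤ med(Z')_x ≤ rightmed(Z)_x. -/
open Real

/-- The left-median of a finite multiset of reals (see context):
    for sorted values `s_1 ≤ … ≤ s_N`, this is `s_k` when `N = 2k` or `N = 2k+1` (`N ≥ 2`),
    and `s_1` when `N = 1`. (0-indexed: `N/2 - 1`.) -/
noncomputable def leftmed (S : Multiset ℝ) : ℝ :=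
  if S.card = 1 then (S.sort (· ≤ ·)).getD 0 0
  else (S.sort (· ≤ ·)).getD (S.card / 2 - 1) 0

/-- The right-median: `s_{k+1}` when `N = 2k`, `s_{k+2}` when `N = 2k+1 ≥ 3`, `s_1` when `N = 1`. -/
noncomputable def rightmed (S : Multiset ℝ) : ℝ :=
  if S.card = 1 then (S.sort (· ≤ ·)).getD 0 0
  else if S.card % 2 = 0 then (S.sort (· ≤ ·)).getD (S.card / 2) 0
  else (S.sort (· ≤ ·)).getD (S.card / 2 + 1) 0

/-- The median: `(s_k + s_{k+1})/2` when `N = 2k`, `s_{k+1}` when `N = 2k+1`. -/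
noncomputable def med (S : Multiset ℝ) : ℝ :=
  if S.card = 1 then (S.sort (· ≤ ·)).getD 0 0
  else if S.card % 2 = 0 then
    ((S.sort (· ≤ ·)).getD (S.card / 2 - 1) 0 + (S.sort (· ≤ ·)).getD (S.card / 2) 0) / 2
  else (S.sort (· ≤ ·)).getD (S.card / 2) 0
/-- Two finite multisets are neighbors if one is obtained from the other by adding a single
    element (equivalently their symmetric difference has size 1). -/
def Neighbors {α : Type*} (Z Z' : Multiset α) : Prop :=
  (∃ a, Z' = a ::ₘ Z) ∨ (∃ a, Z = a ::ₘ Z')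

/-- The multiset `Z^{(x)}` of `x`-th components of a multiset of vectors. -/
def compAt {X : Type*} (Z : Multiset (X → ℝ)) (x : X) : Multiset ℝ :=
  Z.map (fun z => z x)

/-- Componentwise left-median of a multiset of vectors. -/
noncomputable def leftmedVec {X : Type*} (Z : Multiset (X → ℝ)) : X → ℝ :=
  fun x => leftmed (compAt Z x)

/-- Componentwise median of a multiset of vectors. -/
noncomputable def medVec {X : Type*} (Z : Multiset (X → ℝ)) : X → ℝ :=
  fun x => med (compAt Z x)

/-- Componentwise right-median of a multiset of vectors. -/
noncomputable def rightmedVec {X : Type*} (Z : Multiset (X → ℝ)) : X → ℝ :=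
  fun x => rightmed (compAt Z x)

/-!
Inserting an element `a` into a multiset `S` interlaces the order statistics: if `l` and `l'` are
the sorted lists of `S` and `a ::ₘ S`, then `l'[i] ≤ l[i] ≤ l'[i + 1]`, because `l` is `l'` with one
entry removed. Every median of either multiset sits between two adjacent order statistics, and the
interlacing moves these by at most one place in the direction that the claimed bounds allow.
-/

namespace List

variable {α : Type*} [Preorder α] {l : List α}

theorem SortedLE.getElem_le_getElem_eraseIdx (hl : l.SortedLE) {p i : ℕ}
    (hi : i < (l.eraseIdx p).length) :
    l[i]'(hi.trans_le (length_eraseIdx_le l p)) ≤ (l.eraseIdx p)[i] := by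
  rw [getElem_eraseIdx]
  split
  · exact le_rfl
  · exact hl.getElem_le_getElem_of_le (Nat.le_succ i)

theorem SortedLE.getElem_eraseIdx_le_getElem_succ (hl : l.SortedLE) {p i : ℕ}
    (hp : p < l.length) (hi : i < (l.eraseIdx p).length) :
    (l.eraseIdx p)[i] ≤ l[i + 1]'(by grind [length_eraseIdx]) := by
  rw [getElem_eraseIdx]
  split
  · exact hl.getElem_le_getElem_of_le (Nat.le_succ i)
  · exact le_rfl

end List

namespace Multiset

variable {α : Type*} [LinearOrder α]

theorem sortedLE_sort (S : Multiset α) : (S.sort (· ≤ ·)).SortedLE :=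
  (pairwise_sort S _).sortedLE

theorem sort_eq_eraseIdx_sort_cons (S : Multiset α) (a : α) :
    S.sort (· ≤ ·) = ((a ::ₘ S).sort (· ≤ ·)).eraseIdx (((a ::ₘ S).sort (· ≤ ·)).idxOf a) := by
  rw [List.eraseIdx_idxOf_eq_erase]
  refine List.Perm.eq_of_sortedLE (sortedLE_sort S)
    ((pairwise_sort _ _).sublist (List.erase_sublist ..)).sortedLE (Multiset.coe_eq_coe.mp ?_)
  rw [← Multiset.coe_erase, sort_eq, sort_eq, erase_cons_head]

theorem getD_sort_le_getD_sort_of_le {S : Multiset α} (d : α) {i j : ℕ} (hij : i ≤ j)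
    (hj : j < card S) : (S.sort (· ≤ ·)).getD i d ≤ (S.sort (· ≤ ·)).getD j d := by
  rw [List.getD_eq_getElem _ _ (by simp only [length_sort]; omega),
    List.getD_eq_getElem _ _ (by simpa)]
  exact (sortedLE_sort S).getElem_le_getElem_of_le hij

theorem getD_sort_cons_le_getD_sort (S : Multiset α) (a d : α) {i : ℕ} (hi : i < card S) :
    ((a ::ₘ S).sort (· ≤ ·)).getD i d ≤ (S.sort (· ≤ ·)).getD i d := by
  have hS := sort_eq_eraseIdx_sort_cons S a
  have hi' : i < (S.sort (· ≤ ·)).length := by simpa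
  rw [List.getD_eq_getElem _ _ hi',
    List.getD_eq_getElem _ _ (by simp only [length_sort, card_cons]; omega)]
  simp only [hS] at hi' ⊢
  exact (sortedLE_sort _).getElem_le_getElem_eraseIdx hi'

theorem getD_sort_le_getD_sort_cons_succ (S : Multiset α) (a d : α) {i : ℕ}
    (hi : i < card S) :
    (S.sort (· ≤ ·)).getD i d ≤ ((a ::ₘ S).sort (· ≤ ·)).getD (i + 1) d := by
  have hS := sort_eq_eraseIdx_sort_cons S a
  have hi' : i < (S.sort (· ≤ ·)).length := by simpa
  rw [List.getD_eq_getElem _ _ hi',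
    List.getD_eq_getElem _ _ (by simp only [length_sort, card_cons]; omega)]
  simp only [hS] at hi' ⊢
  exact (sortedLE_sort _).getElem_eraseIdx_le_getElem_succ
    (List.idxOf_lt_length_of_mem (by simp)) hi'

end Multiset

open Multiset

theorem leftmed_eq_getD_sort (S : Multiset ℝ) :
    leftmed S = (S.sort (· ≤ ·)).getD (card S / 2 - 1) 0 := by
  unfold leftmed
  split_ifs with h
  · rw [h]
  · rfl

theorem rightmed_eq_getD_sort {S : Multiset ℝ} (hS : card S ≠ 1) :
    rightmed S = (S.sort (· ≤ ·)).getD ((card S + 1) / 2) 0 := by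
  unfold rightmed
  rw [if_neg hS]
  split_ifs <;> congr 1 <;> omega

theorem med_eq_getD_sort (S : Multiset ℝ) :
    med S = ((S.sort (· ≤ ·)).getD ((card S - 1) / 2) 0 +
      (S.sort (· ≤ ·)).getD (card S / 2) 0) / 2 := by
  unfold med
  split_ifs with h1 h2
  · rw [h1]; ring
  · congr 3; omega
  · rw [show (card S - 1) / 2 = card S / 2 by omega]; ring

theorem med_mem_Icc_getD_sort {S : Multiset ℝ} (hS : S ≠ 0) :
    med S ∈ Set.Icc ((S.sort (· ≤ ·)).getD ((card S - 1) / 2) 0)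
      ((S.sort (· ≤ ·)).getD (card S / 2) 0) := by
  have hle := getD_sort_le_getD_sort_of_le (S := S) 0 (i := (card S - 1) / 2) (by omega)
    (Nat.div_lt_self (card_pos.mpr hS) one_lt_two)
  rw [med_eq_getD_sort]
  constructor <;> linarith

theorem leftmed_le_med_cons {S : Multiset ℝ} (a : ℝ) (hS : 2 ≤ card S) :
    leftmed S ≤ med (a ::ₘ S) :=
  calc leftmed S = (S.sort (· ≤ ·)).getD (card S / 2 - 1) 0 := leftmed_eq_getD_sort S
    _ ≤ ((a ::ₘ S).sort (· ≤ ·)).getD (card S / 2 - 1 + 1) 0 :=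
      getD_sort_le_getD_sort_cons_succ S a 0 (by omega)
    _ = ((a ::ₘ S).sort (· ≤ ·)).getD ((card (a ::ₘ S) - 1) / 2) 0 := by
      rw [card_cons]; congr 1; omega
    _ ≤ med (a ::ₘ S) := (med_mem_Icc_getD_sort cons_ne_zero).1

theorem med_cons_le_rightmed {S : Multiset ℝ} (a : ℝ) (hS : 2 ≤ card S) :
    med (a ::ₘ S) ≤ rightmed S :=
  calc med (a ::ₘ S) ≤ ((a ::ₘ S).sort (· ≤ ·)).getD (card (a ::ₘ S) / 2) 0 :=
      (med_mem_Icc_getD_sort cons_ne_zero).2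
    _ ≤ (S.sort (· ≤ ·)).getD ((card S + 1) / 2) 0 := by
      rw [card_cons]; exact getD_sort_cons_le_getD_sort S a 0 (by omega)
    _ = rightmed S := (rightmed_eq_getD_sort (by omega)).symm

theorem leftmed_cons_le_med {S : Multiset ℝ} (a : ℝ) (hS : S ≠ 0) :
    leftmed (a ::ₘ S) ≤ med S :=
  calc leftmed (a ::ₘ S)
    _ = ((a ::ₘ S).sort (· ≤ ·)).getD ((card S - 1) / 2) 0 := by
      rw [leftmed_eq_getD_sort, card_cons]; congr 1; omega
    _ ≤ (S.sort (· ≤ ·)).getD ((card S - 1) / 2) 0 :=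
      getD_sort_cons_le_getD_sort S a 0 (by have := card_pos.mpr hS; omega)
    _ ≤ med S := (med_mem_Icc_getD_sort hS).1

theorem med_le_rightmed_cons {S : Multiset ℝ} (a : ℝ) (hS : S ≠ 0) :
    med S ≤ rightmed (a ::ₘ S) :=
  calc med S ≤ (S.sort (· ≤ ·)).getD (card S / 2) 0 := (med_mem_Icc_getD_sort hS).2
    _ ≤ ((a ::ₘ S).sort (· ≤ ·)).getD (card S / 2 + 1) 0 :=
      getD_sort_le_getD_sort_cons_succ S a 0 (Nat.div_lt_self (card_pos.mpr hS) one_lt_two)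
    _ = rightmed (a ::ₘ S) := by
      have := card_pos.mpr hS
      rw [rightmed_eq_getD_sort (by rw [card_cons]; omega), card_cons]; congr 1; omega

theorem compAt_cons {X : Type*} (Z : Multiset (X → ℝ)) (z : X → ℝ) (x : X) :
    compAt (z ::ₘ Z) x = z x ::ₘ compAt Z x :=
  map_cons _ _ _

theorem card_compAt {X : Type*} (Z : Multiset (X → ℝ)) (x : X) : card (compAt Z x) = card Z :=
  card_map _ _

theorem leftmedVec_le_medVec_neighbor_le_rightmedVec_general
    {X : Type*}
    (Z Z' : Multiset (X → ℝ)) (hZZ' : Neighbors Z Z') (hZ : 3 ≤ Z.card) :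
    ∀ x : X, leftmedVec Z x ≤ medVec Z' x ∧ medVec Z' x ≤ rightmedVec Z x := by
  intro x
  rcases hZZ' with ⟨z, rfl⟩ | ⟨z, rfl⟩
  · have hcard := card_compAt Z x
    simp only [leftmedVec, medVec, rightmedVec, compAt_cons]
    exact ⟨leftmed_le_med_cons _ (by omega), med_cons_le_rightmed _ (by omega)⟩
  · have hZ' : compAt Z' x ≠ 0 := by
      rw [← card_pos, card_compAt]
      rw [card_cons] at hZ
      omega
    simp only [leftmedVec, medVec, rightmedVec, compAt_cons]
    exact ⟨leftmed_cons_le_med _ hZ', med_le_rightmed_cons _ hZ'⟩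

/-- For neighboring finite multisets `Z, Z'` of vectors in `ℝ^X`
    with `|Z| ≥ 3`: for every `x ∈ X`, `leftmed(Z)_x ≤ med(Z')_x ≤ rightmed(Z)_x`. -/
theorem leftmedVec_le_medVec_neighbor_le_rightmedVec
    {X : Type*} [Fintype X] [Nonempty X]
    (Z Z' : Multiset (X → ℝ)) (hZZ' : Neighbors Z Z') (hZ : 3 ≤ Z.card) :
    ∀ x : X, leftmedVec Z x ≤ medVec Z' x ∧ medVec Z' x ≤ rightmedVec Z x :=
  leftmedVec_le_medVec_neighbor_le_rightmedVec_general Z Z' hZZ' hZ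
end

section
/- Let X be a finite nonempty set and let Z and Z' be neighboring finite multisets of vectors z : X → ℝ with |Z| ≥ 3. Then for every x ∈ X, |med(Z')_x − med(Z)_x| ≤ rightmed(Z)_x − leftmed(Z)_x; that is, the local sensitivity of the componentwise median of Z is bounded by the median gap of Z. -/
open Real

/-! Inserting one value into a sorted list interlaces the two lists: if `T = a ::ₘ S` then
`T₍ᵢ₎ ≤ S₍ᵢ₎ ≤ T₍ᵢ₊₁₎`. Consequently, for neighbours `S, S'` with `|S| ≥ 2`, both `med S` and
`med S'` lie in `[leftmed S, rightmed S]`, and two points of an interval are at most its length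
apart. The vector statement is this applied coordinatewise, since `Neighbors` is preserved by
`Multiset.map`. -/

namespace List

variable {α : Type*} [LinearOrder α]

theorem Pairwise.getD_le_getD {l : List α} (hl : l.Pairwise (· ≤ ·)) (d : α) {i j : ℕ}
    (hij : i ≤ j) (hj : j < l.length) : l.getD i d ≤ l.getD j d := by
  rw [getD_eq_getElem l d (hij.trans_lt hj), getD_eq_getElem l d hj]
  exact hl.rel_get_of_le hij

theorem Pairwise.orderedInsert_getD_le (a d : α) :
    ∀ {l : List α}, l.Pairwise (· ≤ ·) → ∀ {i : ℕ}, i < l.length →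
      (l.orderedInsert (· ≤ ·) a).getD i d ≤ l.getD i d
  | [], _, _, hi => absurd hi (Nat.not_lt_zero _)
  | b :: t, hs, i, hi => by
    by_cases hab : a ≤ b
    · rw [orderedInsert_cons_of_le _ _ hab]
      cases i with
      | zero => simpa using hab
      | succ j => exact hs.getD_le_getD d j.le_succ hi
    · rw [orderedInsert_of_not_le _ _ hab]
      cases i with
      | zero => rfl
      | succ j => exact hs.of_cons.orderedInsert_getD_le a d (Nat.lt_of_succ_lt_succ hi)

theorem Pairwise.getD_le_orderedInsert_getD_succ (a d : α) :
    ∀ {l : List α}, l.Pairwise (· ≤ ·) → ∀ {i : ℕ}, i < l.length →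
      l.getD i d ≤ (l.orderedInsert (· ≤ ·) a).getD (i + 1) d
  | [], _, _, hi => absurd hi (Nat.not_lt_zero _)
  | b :: t, hs, i, hi => by
    by_cases hab : a ≤ b
    · rw [orderedInsert_cons_of_le _ _ hab, getD_cons_succ]
    · cases i with
      | zero =>
        calc (b :: t).getD 0 d = ((b :: t).orderedInsert (· ≤ ·) a).getD 0 d := by
              rw [orderedInsert_of_not_le _ _ hab]; rfl
          _ ≤ _ := (hs.orderedInsert a _).getD_le_getD d zero_le_one <| by
              rw [orderedInsert_length]; simp
      | succ j =>
        rw [orderedInsert_of_not_le _ _ hab]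
        exact hs.of_cons.getD_le_orderedInsert_getD_succ a d (Nat.lt_of_succ_lt_succ hi)

end List

namespace Multiset

theorem sort_cons_eq_orderedInsert {α : Type*} [LinearOrder α] (a : α) (S : Multiset α) :
    (a ::ₘ S).sort (· ≤ ·) = (S.sort (· ≤ ·)).orderedInsert (· ≤ ·) a := by
  refine List.Perm.eq_of_pairwise' (pairwise_sort _ _) ((pairwise_sort S _).orderedInsert a _) ?_
  rw [← coe_eq_coe, sort_eq, coe_eq_coe.mpr (List.perm_orderedInsert _ a _), ← cons_coe, sort_eq]

/-- The `i`-th smallest element of `S`, counting from `0`; it is `0` when `S.card ≤ i`. -/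
noncomputable def orderStat (S : Multiset ℝ) (i : ℕ) : ℝ :=
  (S.sort (· ≤ ·)).getD i 0

variable (S : Multiset ℝ) (a : ℝ) {i : ℕ}

theorem orderStat_mono {j : ℕ} (hij : i ≤ j) (hj : j < S.card) :
    S.orderStat i ≤ S.orderStat j :=
  (pairwise_sort S _).getD_le_getD 0 hij (by rwa [length_sort])

theorem orderStat_cons_le (hi : i < S.card) : (a ::ₘ S).orderStat i ≤ S.orderStat i := by
  rw [orderStat, sort_cons_eq_orderedInsert]
  exact (pairwise_sort S _).orderedInsert_getD_le a 0 (by rwa [length_sort])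

theorem orderStat_le_cons_succ (hi : i < S.card) :
    S.orderStat i ≤ (a ::ₘ S).orderStat (i + 1) := by
  rw [orderStat, orderStat, sort_cons_eq_orderedInsert]
  exact (pairwise_sort S _).getD_le_orderedInsert_getD_succ a 0 (by rwa [length_sort])

end Multiset

open Multiset Set

section

variable {S : Multiset ℝ} {k : ℕ}

theorem leftmed_eq_orderStat (S : Multiset ℝ) : leftmed S = S.orderStat (S.card / 2 - 1) := by
  unfold leftmed; split_ifs with h <;> simp [orderStat, h]

theorem med_of_card_eq_two_mul_add_one (hk : S.card = 2 * k + 1) : med S = S.orderStat k := by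
  unfold med
  split_ifs with h1 h2
  · obtain rfl : k = 0 := by omega
    rfl
  · omega
  · rw [show S.card / 2 = k by omega]; rfl

theorem med_of_card_eq_two_mul_add_two (hk : S.card = 2 * k + 2) :
    med S = (S.orderStat k + S.orderStat (k + 1)) / 2 := by
  rw [med, if_neg (by omega), if_pos (by omega), show S.card / 2 = k + 1 by omega]; rfl

theorem rightmed_of_card_eq_one (h : S.card = 1) : rightmed S = S.orderStat 0 := by
  rw [rightmed, if_pos h]; rfl

theorem rightmed_of_card_eq_two_mul_add_two (hk : S.card = 2 * k + 2) :
    rightmed S = S.orderStat (k + 1) := by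
  rw [rightmed, if_neg (by omega), if_pos (by omega), show S.card / 2 = k + 1 by omega]; rfl

theorem rightmed_of_card_eq_two_mul_add_three (hk : S.card = 2 * k + 3) :
    rightmed S = S.orderStat (k + 2) := by
  rw [rightmed, if_neg (by omega), if_neg (by omega), show S.card / 2 = k + 1 by omega]; rfl

theorem med_mem_Icc (hS : 0 < S.card) : med S ∈ Icc (leftmed S) (rightmed S) := by
  rw [leftmed_eq_orderStat]
  obtain h | ⟨k, hk | hk⟩ : S.card = 1 ∨ ∃ k, S.card = 2 * k + 2 ∨ S.card = 2 * k + 3 := by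
    by_cases h : S.card = 1
    exacts [.inl h, .inr ⟨(S.card - 2) / 2, by omega⟩]
  · rw [med_of_card_eq_two_mul_add_one (k := 0) h, rightmed_of_card_eq_one h, h]
    exact ⟨le_rfl, le_rfl⟩
  · rw [med_of_card_eq_two_mul_add_two hk, rightmed_of_card_eq_two_mul_add_two hk,
      show S.card / 2 - 1 = k by omega]
    have := S.orderStat_mono (i := k) k.le_succ (by omega)
    constructor <;> linarith
  · rw [med_of_card_eq_two_mul_add_one (k := k + 1) hk, rightmed_of_card_eq_two_mul_add_three hk,
      show S.card / 2 - 1 = k by omega]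
    exact ⟨S.orderStat_mono k.le_succ (by omega), S.orderStat_mono (k + 1).le_succ (by omega)⟩

theorem med_cons_mem_Icc (a : ℝ) (hS : 2 ≤ S.card) :
    med (a ::ₘ S) ∈ Icc (leftmed S) (rightmed S) := by
  rw [leftmed_eq_orderStat]
  obtain ⟨k, hk | hk⟩ : ∃ k, S.card = 2 * k + 2 ∨ S.card = 2 * k + 3 :=
    ⟨(S.card - 2) / 2, by omega⟩
  · rw [med_of_card_eq_two_mul_add_one (k := k + 1) (by rw [card_cons]; omega),
      rightmed_of_card_eq_two_mul_add_two hk, show S.card / 2 - 1 = k by omega]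
    exact ⟨S.orderStat_le_cons_succ a (by omega), S.orderStat_cons_le a (by omega)⟩
  · rw [med_of_card_eq_two_mul_add_two (k := k + 1) (by rw [card_cons]; omega),
      rightmed_of_card_eq_two_mul_add_three hk, show S.card / 2 - 1 = k by omega]
    constructor
    · linarith [S.orderStat_le_cons_succ a (i := k) (by omega),
        S.orderStat_le_cons_succ a (i := k + 1) (by omega),
        S.orderStat_mono (i := k) k.le_succ (by omega)]
    · linarith [S.orderStat_cons_le a (i := k + 1) (by omega),
        S.orderStat_cons_le a (i := k + 2) (by omega),
        S.orderStat_mono (i := k + 1) (k + 1).le_succ (by omega)]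

theorem med_mem_Icc_cons (a : ℝ) (hS : 0 < S.card) :
    med S ∈ Icc (leftmed (a ::ₘ S)) (rightmed (a ::ₘ S)) := by
  rw [leftmed_eq_orderStat, card_cons]
  obtain ⟨k, hk | hk⟩ : ∃ k, S.card = 2 * k + 1 ∨ S.card = 2 * k + 2 :=
    ⟨(S.card - 1) / 2, by omega⟩
  · rw [med_of_card_eq_two_mul_add_one hk,
      rightmed_of_card_eq_two_mul_add_two (k := k) (by rw [card_cons]; omega),
      show (S.card + 1) / 2 - 1 = k by omega]
    exact ⟨S.orderStat_cons_le a (by omega), S.orderStat_le_cons_succ a (by omega)⟩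
  · rw [med_of_card_eq_two_mul_add_two hk,
      rightmed_of_card_eq_two_mul_add_three (k := k) (by rw [card_cons]; omega),
      show (S.card + 1) / 2 - 1 = k by omega]
    constructor
    · linarith [S.orderStat_cons_le a (i := k) (by omega),
        S.orderStat_mono (i := k) k.le_succ (by omega)]
    · linarith [S.orderStat_le_cons_succ a (i := k + 1) (by omega),
        S.orderStat_mono (i := k) k.le_succ (by omega)]

end

theorem Neighbors.map {α β : Type*} (f : α → β) {Z Z' : Multiset α} (h : Neighbors Z Z') :
    Neighbors (Z.map f) (Z'.map f) := by
  rcases h with ⟨a, rfl⟩ | ⟨a, rfl⟩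
  exacts [.inl ⟨f a, map_cons f a Z⟩, .inr ⟨f a, map_cons f a Z'⟩]

theorem Neighbors.abs_med_sub_le {S S' : Multiset ℝ} (h : Neighbors S S') (hS : 2 ≤ S.card) :
    |med S' - med S| ≤ rightmed S - leftmed S := by
  rw [← Real.dist_eq]
  rcases h with ⟨a, rfl⟩ | ⟨a, rfl⟩
  · exact Real.dist_le_of_mem_Icc (med_cons_mem_Icc a hS) (med_mem_Icc (by omega))
  · rw [card_cons] at hS
    exact Real.dist_le_of_mem_Icc (med_mem_Icc_cons a (by omega)) (med_mem_Icc (by simp))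

theorem abs_medVec_sub_le_median_gap_general
    {X : Type*}
    (Z Z' : Multiset (X → ℝ)) (hZZ' : Neighbors Z Z') (hZ : 3 ≤ Z.card) :
    ∀ x : X, |medVec Z' x - medVec Z x| ≤ rightmedVec Z x - leftmedVec Z x := fun x =>
  (hZZ'.map fun z : X → ℝ => z x).abs_med_sub_le (by rw [card_map]; omega)

/-- For neighboring finite multisets `Z, Z'` of vectors in `ℝ^X`
    with `|Z| ≥ 3`: for every `x ∈ X`,
    `|med(Z')_x − med(Z)_x| ≤ rightmed(Z)_x − leftmed(Z)_x`,
    i.e. the local sensitivity of the componentwise median is bounded by the median gap. -/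
theorem abs_medVec_sub_le_median_gap
    {X : Type*} [Fintype X] [Nonempty X]
    (Z Z' : Multiset (X → ℝ)) (hZZ' : Neighbors Z Z') (hZ : 3 ≤ Z.card) :
    ∀ x : X, |medVec Z' x - medVec Z x| ≤ rightmedVec Z x - leftmedVec Z x :=
  abs_medVec_sub_le_median_gap_general Z Z' hZZ' hZ
end
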